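/- Let m, n₀ ≥ 1 and n ≥ 1, and for each i = 1, …, n let u_i : Fin m × Fin n₀ → ℝ. Define the discrete forward-difference gradient ∇u = (∂₁u, ∂₂u), where ∂₁u(i,j) = u(i+1,j) − u(i,j) if i < m−1 and 0 if i = m−1, and ∂₂u(i,j) = u(i,j+1) − u(i,j) if j < n₀−1 and 0 if j = n₀−1, with ‖∇u‖² = ∑_{i,j}(∂₁u(i,j)² + ∂₂u(i,j)²). Then ∑_{i=1}^{n} ‖∇u_i‖² + ∑_{i=1}^{n} ‖u_i‖² + ‖∑_{i=1}^{n} u_i‖² ≤ (9+n) ∑_{i=1}^{n} ‖u_i‖², where ‖u‖² = ∑_{i,j} u(i,j)². -/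
import Mathlib


open Finset

/-- First component of the discrete forward-difference gradient on an `m × n₀` grid. -/
def d1 {m n₀ : ℕ} (u : Fin m × Fin n₀ → ℝ) (p : Fin m × Fin n₀) : ℝ :=
  if h : (p.1 : ℕ) + 1 < m then u (⟨(p.1 : ℕ) + 1, h⟩, p.2) - u p else 0

/-- Second component of the discrete forward-difference gradient on an `m × n₀` grid. -/
def d2 {m n₀ : ℕ} (u : Fin m × Fin n₀ → ℝ) (p : Fin m × Fin n₀) : ℝ :=
  if h : (p.2 : ℕ) + 1 < n₀ then u (p.1, ⟨(p.2 : ℕ) + 1, h⟩) - u p else 0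

/-- Squared norm of the discrete forward-difference gradient. -/
def gradNormSq {m n₀ : ℕ} (u : Fin m × Fin n₀ → ℝ) : ℝ :=
  ∑ p : Fin m × Fin n₀, ((d1 u p) ^ 2 + (d2 u p) ^ 2)


lemma shift_sum_le {α : Type*} [Fintype α] [DecidableEq α] (P : α → Prop) [DecidablePred P]
    (g : ∀ a, P a → α) (hg : ∀ a ha b hb, g a ha = g b hb → a = b)
    (f : α → ℝ) (hf : ∀ a, 0 ≤ f a) :
    ∑ a, (if h : P a then f (g a h) else 0) ≤ ∑ a, f a := by
  classical
  have h1 : ∑ a, (if h : P a then f (g a h) else 0)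
      = ∑ a ∈ Finset.univ.filter P, (if h : P a then f (g a h) else 0) := by
    rw [Finset.sum_filter_of_ne]
    intro x _ hx
    by_contra h
    simp [dif_neg h] at hx
  rw [h1, ← Finset.sum_attach (Finset.univ.filter P)
    (fun a => if h : P a then f (g a h) else 0)]
  have h2 : ∀ x : {x // x ∈ Finset.univ.filter P}, P x.1 :=
    fun x => (Finset.mem_filter.mp x.2).2
  calc ∑ x : {x // x ∈ Finset.univ.filter P}, (if h : P x.1 then f (g x.1 h) else 0)
      = ∑ x : {x // x ∈ Finset.univ.filter P}, f (g x.1 (h2 x)) :=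
        Finset.sum_congr rfl fun x _ => dif_pos (h2 x)
    _ = ∑ y ∈ Finset.univ.image
          (fun x : {x // x ∈ Finset.univ.filter P} => g x.1 (h2 x)), f y := by
        rw [Finset.sum_image]
        intro a _ b _ hab
        exact Subtype.ext (hg _ _ _ _ hab)
    _ ≤ ∑ a, f a := Finset.sum_le_sum_of_subset_of_nonneg (Finset.subset_univ _)
        fun a _ _ => hf a

/-- `∑ᵢ ‖∇uᵢ‖² + ∑ᵢ ‖uᵢ‖² + ‖∑ᵢ uᵢ‖² ≤ (9+n) ∑ᵢ ‖uᵢ‖²`, the operator norm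
bound `‖K*K‖ ≤ 9 + n` for the multiphase primal-dual formulation. -/
theorem KstarK_multiphase_norm_le (m n₀ : ℕ) (hm : 1 ≤ m) (hn₀ : 1 ≤ n₀) (n : ℕ) (hn : 1 ≤ n)
    (u : Fin n → Fin m × Fin n₀ → ℝ) :
    (∑ i : Fin n, gradNormSq (u i)) + (∑ i : Fin n, ∑ p : Fin m × Fin n₀, (u i p) ^ 2)
        + (∑ p : Fin m × Fin n₀, (∑ i : Fin n, u i p) ^ 2) ≤
      (9 + (n : ℝ)) * ∑ i : Fin n, ∑ p : Fin m × Fin n₀, (u i p) ^ 2 := by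
  have key : ∀ v : Fin m × Fin n₀ → ℝ, gradNormSq v ≤ 8 * ∑ p : Fin m × Fin n₀, v p ^ 2 := by
    intro v
    have sqb : ∀ a b : ℝ, (a - b) ^ 2 ≤ 2 * a ^ 2 + 2 * b ^ 2 := by
      intro a b; nlinarith [sq_nonneg (a + b)]
    have h1 : ∀ p : Fin m × Fin n₀, (d1 v p) ^ 2 ≤
        2 * (if h : (p.1 : ℕ) + 1 < m then v (⟨(p.1 : ℕ) + 1, h⟩, p.2) ^ 2 else 0)
          + 2 * v p ^ 2 := by
      intro p; unfold d1
      split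
      · exact sqb _ _
      · simp; positivity
    have h2 : ∀ p : Fin m × Fin n₀, (d2 v p) ^ 2 ≤
        2 * (if h : (p.2 : ℕ) + 1 < n₀ then v (p.1, ⟨(p.2 : ℕ) + 1, h⟩) ^ 2 else 0)
          + 2 * v p ^ 2 := by
      intro p; unfold d2
      split
      · exact sqb _ _
      · simp; positivity
    have s1 : ∑ p : Fin m × Fin n₀,
        (if h : (p.1 : ℕ) + 1 < m then v (⟨(p.1 : ℕ) + 1, h⟩, p.2) ^ 2 else 0)
          ≤ ∑ p : Fin m × Fin n₀, v p ^ 2 := by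
      refine shift_sum_le (fun p : Fin m × Fin n₀ => (p.1 : ℕ) + 1 < m)
        (fun p h => ((⟨(p.1 : ℕ) + 1, h⟩ : Fin m), p.2)) ?_ (fun p => v p ^ 2)
        (fun p => sq_nonneg _)
      intro a ha b hb hab
      simp only [Prod.mk.injEq, Fin.mk.injEq] at hab
      exact Prod.ext (Fin.ext (by omega)) hab.2
    have s2 : ∑ p : Fin m × Fin n₀,
        (if h : (p.2 : ℕ) + 1 < n₀ then v (p.1, ⟨(p.2 : ℕ) + 1, h⟩) ^ 2 else 0)
          ≤ ∑ p : Fin m × Fin n₀, v p ^ 2 := by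
      refine shift_sum_le (fun p : Fin m × Fin n₀ => (p.2 : ℕ) + 1 < n₀)
        (fun p h => (p.1, (⟨(p.2 : ℕ) + 1, h⟩ : Fin n₀))) ?_ (fun p => v p ^ 2)
        (fun p => sq_nonneg _)
      intro a ha b hb hab
      simp only [Prod.mk.injEq, Fin.mk.injEq] at hab
      exact Prod.ext hab.1 (Fin.ext (by omega))
    calc gradNormSq v ≤ ∑ p : Fin m × Fin n₀,
          ((2 * (if h : (p.1 : ℕ) + 1 < m then v (⟨(p.1 : ℕ) + 1, h⟩, p.2) ^ 2 else 0) + 2 * v p ^ 2)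
          + (2 * (if h : (p.2 : ℕ) + 1 < n₀ then v (p.1, ⟨(p.2 : ℕ) + 1, h⟩) ^ 2 else 0) + 2 * v p ^ 2)) := by
          unfold gradNormSq
          exact Finset.sum_le_sum fun p _ => add_le_add (h1 p) (h2 p)
      _ ≤ 8 * ∑ p : Fin m × Fin n₀, v p ^ 2 := by
          simp only [Finset.sum_add_distrib, ← Finset.mul_sum]
          nlinarith [s1, s2]
  have grad_bound : (∑ i : Fin n, gradNormSq (u i)) ≤
      8 * ∑ i : Fin n, ∑ p : Fin m × Fin n₀, (u i p) ^ 2 := by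
    rw [Finset.mul_sum]
    exact Finset.sum_le_sum fun i _ => key (u i)
  have cs : (∑ p : Fin m × Fin n₀, (∑ i : Fin n, u i p) ^ 2) ≤
      (n : ℝ) * ∑ i : Fin n, ∑ p : Fin m × Fin n₀, (u i p) ^ 2 := by
    rw [Finset.sum_comm, Finset.mul_sum]
    refine Finset.sum_le_sum fun p _ => ?_
    have := sq_sum_le_card_mul_sum_sq (s := (Finset.univ : Finset (Fin n)))
      (f := fun i => u i p)
    simpa using this
  have hsum_nonneg : (0:ℝ) ≤ ∑ i : Fin n, ∑ p : Fin m × Fin n₀, (u i p) ^ 2 := by positivity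
  nlinarith [grad_bound, cs]
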